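/- Let G be a subgroup of U(d) with G = G'' (a gauge group). Then the unital ℂ-subalgebra generated by Q(G) = {V^{⊗n} : V ∈ G} equals the intersection of the unital ℂ-subalgebra generated by G^{×n} with the commutant of the permutation operators {P(σ) : σ a permutation of Fin n}; that is, Alg(Q(G)) is exactly the permutationally invariant subalgebra of Alg(G^{×n}). -/

import Mathlib

open Matrix

noncomputable section

/-- Matrices on the n-fold tensor power (ℂ^d)^{⊗n}. -/
abbrev MatN (d n : ℕ) := Matrix (Fin n → Fin d) (Fin n → Fin d) ℂ

/-- The n-fold tensor power V^{⊗n} of a matrix V on ℂ^d. -/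
def tpow (d n : ℕ) (V : Matrix (Fin d) (Fin d) ℂ) : MatN d n :=
  Matrix.of fun x y => ∏ i, V (x i) (y i)

/-- The tensor product V₁ ⊗ ⋯ ⊗ Vₙ of n matrices on ℂ^d. -/
def tensProd (d n : ℕ) (V : Fin n → Matrix (Fin d) (Fin d) ℂ) : MatN d n :=
  Matrix.of fun x y => ∏ i, V i (x i) (y i)

/-- The permutation operator P(σ) on (ℂ^d)^{⊗n}. -/
def permMat (d n : ℕ) (σ : Equiv.Perm (Fin n)) : MatN d n :=
  Matrix.of fun x y => if x = y ∘ ⇑σ⁻¹ then 1 else 0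

/-- Q(G) : the collective action {V^{⊗n} : V ∈ G}. -/
def Qset (d n : ℕ) (G : Subgroup (Matrix.unitaryGroup (Fin d) ℂ)) : Set (MatN d n) :=
  {M | ∃ V ∈ G, M = tpow d n ((V : Matrix.unitaryGroup (Fin d) ℂ) : Matrix (Fin d) (Fin d) ℂ)}

/-- G^{×n} : the set of tensor products V₁ ⊗ ⋯ ⊗ Vₙ with each Vᵢ ∈ G. -/
def groupTensorSet (d n : ℕ) (G : Subgroup (Matrix.unitaryGroup (Fin d) ℂ)) :
    Set (MatN d n) :=
  {W | ∃ V : Fin n → G,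
    W = tensProd d n fun i => ((V i : Matrix.unitaryGroup (Fin d) ℂ) : Matrix (Fin d) (Fin d) ℂ)}

/-! The gauge condition G = G'' makes G closed under exponentials: a skew-adjoint x in the
*-algebra generated by G commutes with G', hence the unitary exp x lies in G'' = G.
Differentiating t ↦ exp(t x)^{⊗n} at t = 0 then puts the collective generator
∑ⱼ 1 ⊗ ⋯ ⊗ x ⊗ ⋯ ⊗ 1 into Alg(Q(G)). Writing S(b₁,…,bₘ) for the sum of all placements of
b₁,…,bₘ into distinct tensor factors (identities elsewhere), one has
(∑ⱼ 1 ⊗ ⋯ ⊗ a ⊗ ⋯ ⊗ 1) · S(b) = S(a, b) + ∑ᵢ S(b with bᵢ replaced by a bᵢ),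
so by induction S(b) ∈ Alg(Q(G)) whenever every bᵢ lies in the *-algebra of G. For m = n,
S(V₁,…,Vₙ) is the symmetrization of V₁ ⊗ ⋯ ⊗ Vₙ. Since Alg(G^{×n}) is the linear span of
G^{×n}, a permutation-invariant X in it is 1/n! times its symmetrization, which lies in
Alg(Q(G)). -/

open NormedSpace in
theorem Submodule.mem_of_forall_exp_smul_mem {𝔸 : Type*} [NormedRing 𝔸] [NormedAlgebra ℝ 𝔸]
    [CompleteSpace 𝔸] {S : Submodule ℝ 𝔸} (hS : IsClosed (S : Set 𝔸)) {B : 𝔸}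
    (h : ∀ t : ℝ, exp (t • B) ∈ S) : B ∈ S := by
  have hB : deriv (fun t : ℝ => exp (t • B)) 0 = B := by
    simpa using (hasDerivAt_exp_smul_const B (0 : ℝ)).deriv
  have hspan : Submodule.span ℝ ((fun t : ℝ => exp (t • B)) '' Set.univ) ≤ S :=
    Submodule.span_le.mpr (Set.image_subset_iff.mpr fun t _ => h t)
  rw [← hB, ← SetLike.mem_coe, ← hS.closure_eq]
  exact closure_mono hspan (range_deriv_subset_closure_span_image _ dense_univ ⟨0, rfl⟩)

theorem Function.Embedding.sum_eq_sum_compl_map_add {α β M : Type*} [Fintype α] [Fintype β]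
    [DecidableEq β] [AddCommMonoid M] (c : α ↪ β) (f : β → M) :
    ∑ j, f j = ∑ j ∈ (Finset.univ.map c)ᶜ, f j + ∑ i, f (c i) := by
  rw [← Finset.sum_map Finset.univ c f, Finset.sum_compl_add_sum]

local notation "Mat[" d "]" => Matrix (Fin d) (Fin d) ℂ

variable {d n : ℕ} {G : Subgroup (unitaryGroup (Fin d) ℂ)}

variable (G) in
def IsGaugeGroup : Prop :=
  Subgroup.centralizer ((Subgroup.centralizer (G : Set _) : Subgroup (unitaryGroup (Fin d) ℂ))
    : Set _) = G

variable (G) in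
def groupStarAlgebra : StarSubalgebra ℂ (Mat[d]) :=
  StarAlgebra.adjoin ℂ ((↑) '' (G : Set (unitaryGroup (Fin d) ℂ)))

theorem coe_mem_groupStarAlgebra {V : unitaryGroup (Fin d) ℂ} (hV : V ∈ G) :
    (V : Mat[d]) ∈ groupStarAlgebra G :=
  StarAlgebra.subset_adjoin ℂ _ ⟨V, hV, rfl⟩

theorem commute_coe_of_mem_centralizer {W : unitaryGroup (Fin d) ℂ}
    (hW : W ∈ Subgroup.centralizer (G : Set (unitaryGroup (Fin d) ℂ)))
    {a : Mat[d]} (ha : a ∈ groupStarAlgebra G) : Commute (W : Mat[d]) a := by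
  have hWc : (W : Mat[d]) ∈
      StarSubalgebra.centralizer ℂ ((↑) '' (G : Set (unitaryGroup (Fin d) ℂ))) := by
    rw [StarSubalgebra.mem_centralizer_iff]
    rintro _ ⟨V, hV, rfl⟩
    have hVW : V * W = W * V := Subgroup.mem_centralizer_iff.mp hW V hV
    refine ⟨congrArg Subtype.val hVW, ?_⟩
    rw [← Unitary.coe_star, Unitary.star_eq_inv]
    exact congrArg Subtype.val (Commute.inv_left hVW)
  exact ((StarSubalgebra.mem_centralizer_iff ℂ).mp
    (StarAlgebra.adjoin_le_centralizer_centralizer ℂ _ ha) _ hWc).1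

theorem tensProd_mul (V W : Fin n → Mat[d]) :
    tensProd d n V * tensProd d n W = tensProd d n (V * W) := by
  ext x y
  simp only [tensProd, mul_apply, of_apply, Pi.mul_apply, ← Finset.prod_mul_distrib,
    Fintype.prod_sum]

theorem tensProd_one : tensProd d n 1 = 1 := by
  ext x y
  simp only [tensProd, of_apply, Pi.one_apply, one_apply, Finset.prod_boole, funext_iff,
    Finset.mem_univ, true_imp_iff]

variable (d n) in
def tensProdHom : (Fin n → Mat[d]) →* MatN d n where
  toFun := tensProd d n
  map_one' := tensProd_one
  map_mul' V W := (tensProd_mul V W).symm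

theorem tensProd_mulSingle_apply (j : Fin n) (a : Mat[d]) (x y : Fin n → Fin d) :
    tensProd d n (Pi.mulSingle j a) x y
      = a (x j) (y j) * ∏ i ∈ {j}ᶜ, (1 : Mat[d]) (x i) (y i) := by
  rw [tensProd, of_apply, Fintype.prod_eq_mul_prod_compl j, Pi.mulSingle_eq_same]
  congr 1
  refine Finset.prod_congr rfl fun i hi => ?_
  rw [Pi.mulSingle_eq_of_ne (by simpa using hi)]

def slotEmb (j : Fin n) : Mat[d] →ₐ[ℂ] MatN d n :=
  AlgHom.ofLinearMap
    { toFun a := tensProd d n (Pi.mulSingle j a)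
      map_add' a b := by
        ext x y
        simp only [Matrix.add_apply, tensProd_mulSingle_apply, add_mul]
      map_smul' c a := by
        ext x y
        simp only [Matrix.smul_apply, tensProd_mulSingle_apply, smul_eq_mul, mul_assoc,
          RingHom.id_apply] }
    (by simp only [LinearMap.coe_mk, AddHom.coe_mk, Pi.mulSingle_one]; exact tensProd_one)
    (fun a b => by simp only [LinearMap.coe_mk, AddHom.coe_mk, ← tensProd_mul, Pi.mulSingle_mul])

theorem slotEmb_apply (j : Fin n) (a : Mat[d]) :
    slotEmb j a = tensProdHom d n (Pi.mulSingle j a) := rfl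

theorem commute_slotEmb {i j : Fin n} (hij : i ≠ j) (a b : Mat[d]) :
    Commute (slotEmb i a) (slotEmb j b) := by
  rw [slotEmb_apply, slotEmb_apply]
  exact (Pi.mulSingle_commute (f := fun _ : Fin n => Mat[d]) hij a b).map (tensProdHom d n)

variable (d n) in
def tpowGen : Mat[d] →ₗ[ℂ] MatN d n := ∑ j, (slotEmb j).toLinearMap

theorem tpowGen_apply (a : Mat[d]) : tpowGen d n a = ∑ j, slotEmb j a := by
  simp [tpowGen]

theorem tpow_mem_adjoin_Qset {V : unitaryGroup (Fin d) ℂ} (hV : V ∈ G) :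
    tpow d n (V : Mat[d]) ∈ Algebra.adjoin ℂ (Qset d n G) :=
  Algebra.subset_adjoin ⟨V, hV, rfl⟩

section Exp

-- Matrices carry no global norm; `exp` depends only on the topology, which all norms share.
attribute [local instance] Matrix.linftyOpNormedRing Matrix.linftyOpNormedAlgebra

open NormedSpace

theorem exists_mem_coe_eq_exp (hG : IsGaugeGroup G) {x : Mat[d]} (hx : x ∈ groupStarAlgebra G)
    (hskew : x ∈ skewAdjoint (Mat[d])) : ∃ U ∈ G, (U : Mat[d]) = exp x := by
  have hunit : exp x ∈ unitaryGroup (Fin d) ℂ := by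
    rw [mem_unitaryGroup_iff, star_eq_conjTranspose, ← Matrix.exp_conjTranspose,
      ← star_eq_conjTranspose, skewAdjoint.mem_iff.mp hskew,
      ← Matrix.exp_add_of_commute _ _ (Commute.neg_right (Commute.refl x)), add_neg_cancel,
      exp_zero]
  refine ⟨⟨exp x, hunit⟩, ?_, rfl⟩
  rw [← hG, Subgroup.mem_centralizer_iff]
  exact fun W hW => Subtype.ext (commute_coe_of_mem_centralizer hW hx).exp_right.eq

theorem exp_tpowGen (a : Mat[d]) : exp (tpowGen d n a) = tpow d n (exp a) := by
  have hcont (j : Fin n) : Continuous (slotEmb (d := d) j) :=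
    LinearMap.continuous_of_finiteDimensional (slotEmb j).toLinearMap
  have hcomm : (↑(Finset.univ : Finset (Fin n)) : Set (Fin n)).Pairwise
      (Function.onFun Commute fun j => slotEmb j a) :=
    fun i _ j _ hij => commute_slotEmb hij a a
  rw [tpowGen_apply]
  refine (Matrix.exp_sum_of_commute _ _ hcomm).trans ?_
  refine (Finset.noncommProd_congr rfl (fun j _ => (map_exp _ (hcont j) a).symm) _).trans ?_
  refine (Finset.map_noncommProd _ (fun j => Pi.mulSingle j (exp a))
    (fun i _ j _ _ => Pi.mulSingle_apply_commute (fun _ => exp a) i j)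
    (tensProdHom d n)).symm.trans ?_
  rw [Finset.noncommProd_mulSingle (fun _ => exp a)]
  rfl

theorem tpowGen_mem_adjoin_Qset_of_mem_skewAdjoint (hG : IsGaugeGroup G) {x : Mat[d]}
    (hx : x ∈ groupStarAlgebra G) (hskew : x ∈ skewAdjoint (Mat[d])) :
    tpowGen d n x ∈ Algebra.adjoin ℂ (Qset d n G) := by
  have hexp (t : ℝ) : exp (t • tpowGen d n x) ∈ Algebra.adjoin ℂ (Qset d n G) := by
    have htx : (t : ℂ) • x ∈ skewAdjoint (Mat[d]) := by
      rw [skewAdjoint.mem_iff, star_smul, Complex.star_def, Complex.conj_ofReal,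
        skewAdjoint.mem_iff.mp hskew, smul_neg]
    obtain ⟨U, hU, hUx⟩ := exists_mem_coe_eq_exp hG (Subalgebra.smul_mem _ hx (t : ℂ)) htx
    rw [← Complex.coe_smul, ← map_smul, exp_tpowGen, ← hUx]
    exact tpow_mem_adjoin_Qset hU
  let S := Subalgebra.toSubmodule (Algebra.adjoin ℂ (Qset d n G))
  exact Submodule.mem_of_forall_exp_smul_mem (S := S.restrictScalars ℝ)
    S.closed_of_finiteDimensional hexp

end Exp

theorem tpowGen_mem_adjoin_Qset (hG : IsGaugeGroup G) {a : Mat[d]}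
    (ha : a ∈ groupStarAlgebra G) : tpowGen d n a ∈ Algebra.adjoin ℂ (Qset d n G) := by
  have hskew₁ : a - star a ∈ skewAdjoint (Mat[d]) := by
    rw [skewAdjoint.mem_iff, star_sub, star_star, neg_sub]
  have hskew₂ : Complex.I • (a + star a) ∈ skewAdjoint (Mat[d]) := by
    rw [skewAdjoint.mem_iff, star_smul, star_add, star_star, add_comm, Complex.star_def,
      Complex.conj_I, neg_smul]
  have hsa : star a ∈ groupStarAlgebra G := star_mem ha
  have hdecomp : a = (2 : ℂ)⁻¹ • ((a - star a) + (-Complex.I) • Complex.I • (a + star a)) := by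
    rw [smul_smul, neg_mul, Complex.I_mul_I, neg_neg, one_smul]
    module
  rw [hdecomp, map_smul, map_add, map_smul]
  refine Subalgebra.smul_mem _ (add_mem ?_ (Subalgebra.smul_mem _ ?_ _)) _
  · exact tpowGen_mem_adjoin_Qset_of_mem_skewAdjoint hG (sub_mem ha hsa) hskew₁
  · exact tpowGen_mem_adjoin_Qset_of_mem_skewAdjoint hG
      (StarSubalgebra.smul_mem _ (add_mem ha hsa) _) hskew₂

def placeTensor {m : ℕ} (c : Fin m ↪ Fin n) (b : Fin m → Mat[d]) : MatN d n :=
  tensProd d n (Function.extend c b 1)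

variable (n) in
def symTensor {m : ℕ} (b : Fin m → Mat[d]) : MatN d n :=
  ∑ c : Fin m ↪ Fin n, placeTensor c b

theorem slotEmb_mul_placeTensor_of_mem {m : ℕ} (c : Fin m ↪ Fin n) (b : Fin m → Mat[d])
    (i : Fin m) (a : Mat[d]) :
    slotEmb (c i) a * placeTensor c b = placeTensor c (Function.update b i (a * b i)) := by
  rw [slotEmb_apply, placeTensor, placeTensor]
  refine (tensProd_mul _ _).trans (congrArg _ (funext fun p => ?_))
  by_cases hp : ∃ k, c k = p
  · obtain ⟨k, rfl⟩ := hp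
    rw [Pi.mul_apply, c.injective.extend_apply, c.injective.extend_apply]
    rcases eq_or_ne k i with rfl | hki
    · rw [Pi.mulSingle_eq_same, Function.update_self]
    · rw [Pi.mulSingle_eq_of_ne (c.injective.ne hki), Function.update_of_ne hki, one_mul]
  · rw [Pi.mul_apply, Function.extend_apply' _ _ _ hp, Function.extend_apply' _ _ _ hp,
      Pi.mulSingle_eq_of_ne fun h => hp ⟨i, h.symm⟩, Pi.one_apply, mul_one]

theorem slotEmb_mul_placeTensor_of_notMem {m : ℕ} (c : Fin m ↪ Fin n) (b : Fin m → Mat[d])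
    {j : Fin n} (hj : j ∉ Set.range c) (a : Mat[d]) :
    slotEmb j a * placeTensor c b
      = placeTensor ((Equiv.embeddingFinSucc m (Fin n)).symm ⟨c, j, hj⟩) (Fin.cons a b) := by
  set e := (Equiv.embeddingFinSucc m (Fin n)).symm ⟨c, j, hj⟩
  have he : ⇑e = Fin.cons j c := Equiv.coe_embeddingFinSucc_symm _
  rw [slotEmb_apply, placeTensor, placeTensor]
  refine (tensProd_mul _ _).trans (congrArg _ (funext fun p => ?_))
  rw [Pi.mul_apply]
  by_cases hp : ∃ k, c k = p
  · obtain ⟨k, rfl⟩ := hp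
    have hk : e k.succ = c k := by rw [he, Fin.cons_succ]
    rw [c.injective.extend_apply, ← hk, e.injective.extend_apply, Fin.cons_succ, hk,
      Pi.mulSingle_eq_of_ne fun h => hj ⟨k, h⟩, one_mul]
  · rw [Function.extend_apply' _ _ _ hp, Pi.one_apply, mul_one]
    rcases eq_or_ne p j with rfl | hpj
    · have h0 : e 0 = p := by rw [he, Fin.cons_zero]
      rw [Pi.mulSingle_eq_same, ← h0, e.injective.extend_apply, Fin.cons_zero]
    · rw [Pi.mulSingle_eq_of_ne hpj, Function.extend_apply' _ _ _ ?_, Pi.one_apply]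
      rintro ⟨k, hk⟩
      rw [he] at hk
      induction k using Fin.cases with
      | zero => exact hpj hk.symm
      | succ k => exact hp ⟨k, hk⟩

theorem tpowGen_mul_symTensor {m : ℕ} (a : Mat[d]) (b : Fin m → Mat[d]) :
    tpowGen d n a * symTensor n b
      = symTensor n (Fin.cons a b) + ∑ i, symTensor n (Function.update b i (a * b i)) := by
  classical
  have hsplit (c : Fin m ↪ Fin n) : tpowGen d n a * placeTensor c b
      = ∑ j ∈ (Finset.univ.map c)ᶜ, slotEmb j a * placeTensor c b
        + ∑ i, placeTensor c (Function.update b i (a * b i)) := by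
    rw [tpowGen_apply, Finset.sum_mul, c.sum_eq_sum_compl_map_add]
    simp only [slotEmb_mul_placeTensor_of_mem]
  have hcons (c : Fin m ↪ Fin n) : ∑ j ∈ (Finset.univ.map c)ᶜ, slotEmb j a * placeTensor c b
      = ∑ j : {j // j ∉ Set.range c}, placeTensor
          ((Equiv.embeddingFinSucc m (Fin n)).symm ⟨c, j⟩) (Fin.cons a b) := by
    rw [Finset.sum_subtype (p := (· ∉ Set.range c)) _ fun j => by simp]
    exact Fintype.sum_congr _ _ fun j => slotEmb_mul_placeTensor_of_notMem c b j.2 a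
  rw [symTensor, Finset.mul_sum, Finset.sum_congr rfl fun c _ => hsplit c, Finset.sum_add_distrib,
    Finset.sum_congr rfl fun c _ => hcons c, symTensor,
    ← (Equiv.embeddingFinSucc m (Fin n)).symm.sum_comp, Fintype.sum_sigma]
  simp only [symTensor]
  rw [Finset.sum_comm]

theorem symTensor_zero (b : Fin 0 → Mat[d]) : symTensor n b = 1 := by
  rw [symTensor, Fintype.sum_unique, placeTensor, ← tensProd_one]
  congr 1
  funext p
  exact Function.extend_apply' _ _ _ fun ⟨k, _⟩ => k.elim0

theorem symTensor_mem_adjoin_Qset (hG : IsGaugeGroup G)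
    {m : ℕ} (b : Fin m → Mat[d]) (hb : ∀ i, b i ∈ groupStarAlgebra G) :
    symTensor n b ∈ Algebra.adjoin ℂ (Qset d n G) := by
  induction m with
  | zero => rw [symTensor_zero]; exact one_mem _
  | succ m ih =>
    rw [← Fin.cons_self_tail b, eq_sub_of_add_eq (tpowGen_mul_symTensor _ _).symm]
    refine sub_mem (mul_mem (tpowGen_mem_adjoin_Qset hG (hb 0)) (ih _ fun i => hb i.succ))
      (sum_mem fun i _ => ih _ fun k => ?_)
    rcases eq_or_ne k i with rfl | hki
    · rw [Function.update_self]
      exact mul_mem (hb 0) (hb k.succ)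
    · rw [Function.update_of_ne hki]
      exact hb k.succ

def permAct (σ : Equiv.Perm (Fin n)) : MatN d n →ₗ[ℂ] MatN d n where
  toFun X := X.submatrix (· ∘ σ) (· ∘ σ)
  map_add' _ _ := rfl
  map_smul' _ _ := rfl

theorem permAct_apply (σ : Equiv.Perm (Fin n)) (X : MatN d n) (x y : Fin n → Fin d) :
    permAct σ X x y = X (x ∘ σ) (y ∘ σ) := rfl

theorem permAct_tensProd (σ : Equiv.Perm (Fin n)) (V : Fin n → Mat[d]) :
    permAct σ (tensProd d n V) = tensProd d n (V ∘ σ.symm) := by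
  ext x y
  simpa [permAct_apply, tensProd] using Equiv.prod_comp σ fun i => V (σ.symm i) (x i) (y i)

theorem permMat_mul_apply (σ : Equiv.Perm (Fin n)) (X : MatN d n) (x y : Fin n → Fin d) :
    (permMat d n σ * X) x y = X (x ∘ σ) y := by
  have hx (z : Fin n → Fin d) : x = z ∘ ⇑σ⁻¹ ↔ x ∘ σ = z := by
    constructor <;> rintro rfl <;> funext i <;> simp
  simp only [permMat, mul_apply, of_apply, hx, ite_mul, one_mul, zero_mul, Finset.sum_ite_eq,
    Finset.mem_univ, if_true]

theorem mul_permMat_apply (σ : Equiv.Perm (Fin n)) (X : MatN d n) (x y : Fin n → Fin d) :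
    (X * permMat d n σ) x y = X x (y ∘ ⇑σ⁻¹) := by
  simp only [permMat, mul_apply, of_apply, mul_ite, mul_one, mul_zero, Finset.sum_ite_eq',
    Finset.mem_univ, if_true]

theorem permMat_mul_eq_mul_permMat_iff (σ : Equiv.Perm (Fin n)) (X : MatN d n) :
    permMat d n σ * X = X * permMat d n σ ↔ permAct σ X = X := by
  have hcancel (y : Fin n → Fin d) : y ∘ σ ∘ ⇑σ⁻¹ = y := by funext i; simp
  have hcancel' (y : Fin n → Fin d) : y ∘ ⇑σ⁻¹ ∘ σ = y := by funext i; simp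
  constructor
  · intro h
    ext x y
    calc permAct σ X x y = (permMat d n σ * X) x (y ∘ σ) := (permMat_mul_apply σ X x _).symm
      _ = X x y := by rw [h, mul_permMat_apply, Function.comp_assoc, hcancel]
  · intro h
    ext x y
    calc (permMat d n σ * X) x y = permAct σ X x (y ∘ ⇑σ⁻¹) := by
          rw [permMat_mul_apply, permAct_apply, Function.comp_assoc, hcancel']
      _ = (X * permMat d n σ) x y := by rw [h, mul_permMat_apply]

variable (d n) in
def symmetrize : MatN d n →ₗ[ℂ] MatN d n := ∑ σ : Equiv.Perm (Fin n), permAct σ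

theorem symmetrize_tensProd (V : Fin n → Mat[d]) :
    symmetrize d n (tensProd d n V) = symTensor n V := by
  have hplace (σ : Equiv.Perm (Fin n)) :
      placeTensor σ.toEmbedding V = tensProd d n (V ∘ σ.symm) := by
    rw [placeTensor]
    congr 1
    funext p
    rw [Equiv.coe_toEmbedding, Function.comp_apply, ← σ.injective.extend_apply V 1,
      σ.apply_symm_apply]
  rw [symmetrize, LinearMap.sum_apply, symTensor,
    ← (Equiv.embeddingEquivOfFinite (Fin n)).symm.sum_comp]
  exact Finset.sum_congr rfl fun σ _ => (permAct_tensProd σ V).trans (hplace σ).symm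

theorem symmetrize_eq_factorial_smul {X : MatN d n}
    (hX : ∀ σ : Equiv.Perm (Fin n), permMat d n σ * X = X * permMat d n σ) :
    symmetrize d n X = (n.factorial : ℂ) • X := by
  simp only [symmetrize, LinearMap.sum_apply,
    fun σ => (permMat_mul_eq_mul_permMat_iff σ X).mp (hX σ), Finset.sum_const, Finset.card_univ,
    Fintype.card_perm, Fintype.card_fin, Nat.cast_smul_eq_nsmul]

theorem Qset_subset_groupTensorSet : Qset d n G ⊆ groupTensorSet d n G := by
  rintro _ ⟨V, hV, rfl⟩
  exact ⟨fun _ => ⟨V, hV⟩, rfl⟩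

theorem toSubmodule_adjoin_groupTensorSet :
    Subalgebra.toSubmodule (Algebra.adjoin ℂ (groupTensorSet d n G))
      = Submodule.span ℂ (groupTensorSet d n G) := by
  refine Algebra.adjoin_eq_span_of_subset ℂ (fun X hX => Submodule.subset_span ?_)
  induction hX using Submonoid.closure_induction with
  | mem X hX => exact hX
  | one => exact ⟨1, tensProd_one.symm⟩
  | mul X Y _ _ hX hY =>
    obtain ⟨V, rfl⟩ := hX
    obtain ⟨W, rfl⟩ := hY
    exact ⟨V * W, tensProd_mul _ _⟩

theorem symmetrize_mem_adjoin_Qset (hG : IsGaugeGroup G)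
    {X : MatN d n} (hX : X ∈ Algebra.adjoin ℂ (groupTensorSet d n G)) :
    symmetrize d n X ∈ Algebra.adjoin ℂ (Qset d n G) := by
  rw [← Subalgebra.mem_toSubmodule, toSubmodule_adjoin_groupTensorSet] at hX
  suffices X ∈ (Subalgebra.toSubmodule (Algebra.adjoin ℂ (Qset d n G))).comap (symmetrize d n)
    from this
  refine Submodule.span_le.mpr ?_ hX
  rintro _ ⟨V, rfl⟩
  rw [SetLike.mem_coe, Submodule.mem_comap, symmetrize_tensProd]
  exact symTensor_mem_adjoin_Qset hG _ fun i => coe_mem_groupStarAlgebra (V i).2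

theorem adjoin_Qset_le_centralizer_permMat :
    Algebra.adjoin ℂ (Qset d n G) ≤ Subalgebra.centralizer ℂ (Set.range (permMat d n)) := by
  rw [Algebra.adjoin_le_iff]
  rintro _ ⟨V, -, rfl⟩ _ ⟨σ, rfl⟩
  rw [permMat_mul_eq_mul_permMat_iff, tpow, ← tensProd, permAct_tensProd]
  rfl

theorem collective_algebra_eq_permutation_invariant_part_general (d n : ℕ)
    (G : Subgroup (Matrix.unitaryGroup (Fin d) ℂ))
    (hGauge : Subgroup.centralizer ((Subgroup.centralizer (G : Set _)
        : Subgroup (Matrix.unitaryGroup (Fin d) ℂ)) : Set _) = G) :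
    (Algebra.adjoin ℂ (Qset d n G) : Set (MatN d n))
      = (Algebra.adjoin ℂ (groupTensorSet d n G) : Set (MatN d n))
          ∩ {X : MatN d n | ∀ σ : Equiv.Perm (Fin n),
              permMat d n σ * X = X * permMat d n σ} := by
  ext X
  constructor
  · intro hX
    exact ⟨Algebra.adjoin_mono Qset_subset_groupTensorSet hX,
      fun σ => adjoin_Qset_le_centralizer_permMat hX _ ⟨σ, rfl⟩⟩
  · rintro ⟨hXT, hXP⟩
    have hsym := symmetrize_mem_adjoin_Qset hGauge hXT
    rw [symmetrize_eq_factorial_smul hXP] at hsym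
    have hn : (n.factorial : ℂ) ≠ 0 := Nat.cast_ne_zero.mpr n.factorial_ne_zero
    simpa [smul_smul, inv_mul_cancel₀ hn] using Subalgebra.smul_mem _ hsym (n.factorial : ℂ)⁻¹

theorem collective_algebra_eq_permutation_invariant_part (d n : ℕ) (hd : 1 ≤ d) (hn : 1 ≤ n)
    (G : Subgroup (Matrix.unitaryGroup (Fin d) ℂ))
    (hGauge : Subgroup.centralizer ((Subgroup.centralizer (G : Set _)
        : Subgroup (Matrix.unitaryGroup (Fin d) ℂ)) : Set _) = G) :
    (Algebra.adjoin ℂ (Qset d n G) : Set (MatN d n))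
      = (Algebra.adjoin ℂ (groupTensorSet d n G) : Set (MatN d n))
          ∩ {X : MatN d n | ∀ σ : Equiv.Perm (Fin n),
              permMat d n σ * X = X * permMat d n σ} :=
  collective_algebra_eq_permutation_invariant_part_general d n G hGauge
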